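/- arXiv:0810.1391 — 6 statements merged into one kernel-verified Lean document; each statement's English description precedes it below -/
import Mathlib

section
/- If A ⊆ (ω+1)^ω is a set such that the restriction of the Pawlikowski function P to A is continuous, then the image P[A] is nowhere dense in ω^ω. -/
/-!
Suppose `P[A]` is dense in a cylinder `[s]` of length `N`. Then it contains some `P a ∈ [s]` with
`P a N = 0`, i.e. `a N = ∞`. By continuity of `P` on `A` at `a`, the points of `A` in some
neighbourhood `U` of `a` also have `N`-th coordinate `∞`. But `U` contains `x = a[N ↦ k]` for
large `k`, and since `P` acts coordinatewise and injectively, `P⁻¹` maps cylinders onto cylinders: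
density of `P[A]` near `P x` gives some `a' ∈ A ∩ U` with `a' N = k`.
-/

open OnePoint

/-- The Pawlikowski function `P : (ω+1)^ω → ω^ω`. -/
noncomputable def pawlikowski (x : ℕ → OnePoint ℕ) : ℕ → ℕ :=
  fun n => Option.elim (x n) 0 (fun k => k + 1)

open Filter Topology PiNat Function

lemma PiNat.eventually_cylinder_subset {E : ℕ → Type*} [∀ n, TopologicalSpace (E n)]
    {x : ∀ n, E n} {U : Set (∀ n, E n)} (hU : U ∈ 𝓝 x) :
    ∀ᶠ N in atTop, cylinder x N ⊆ U := by
  rw [nhds_pi, mem_pi] at hU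
  obtain ⟨I, hI, t, ht, htU⟩ := hU
  obtain ⟨n, hn⟩ := hI.bddAbove
  filter_upwards [eventually_gt_atTop n] with N hN y hy
  refine htU fun i hi => ?_
  rw [mem_cylinder_iff.1 hy i ((hn hi).trans_lt hN)]
  exact mem_of_mem_nhds (ht i)

lemma PiNat.inter_cylinder_nonempty_of_subset_closure {E : ℕ → Type*}
    [∀ n, TopologicalSpace (E n)] [∀ n, DiscreteTopology (E n)] {s : Set (∀ n, E n)}
    {y z : ∀ n, E n} {N : ℕ} (hN : cylinder y N ⊆ closure s) (hz : z ∈ cylinder y N) (M : ℕ) :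
    (cylinder z M ∩ s).Nonempty :=
  mem_closure_iff.1 (hN hz) _ (isOpen_cylinder _ z M) (self_mem_cylinder z M)

lemma OnePoint.tendsto_update_coe_of_eq_infty {ι X : Type*} [TopologicalSpace X] [DecidableEq ι]
    {x : ι → OnePoint X} {i : ι} (hi : x i = ∞) :
    Tendsto (fun k : X => update x i (k : OnePoint X)) (coclosedCompact X) (𝓝 x) := by
  simpa [← hi] using (tendsto_const_nhds (x := x)).update i (OnePoint.tendsto_coe_infty (X := X))

@[simp]
lemma pawlikowski_apply_of_eq_infty {x : ℕ → OnePoint ℕ} {n : ℕ} (h : x n = ∞) :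
    pawlikowski x n = 0 := by
  rw [pawlikowski, h]; rfl

@[simp]
lemma pawlikowski_apply_of_eq_coe {x : ℕ → OnePoint ℕ} {n k : ℕ} (h : x n = k) :
    pawlikowski x n = k + 1 := by
  rw [pawlikowski, h]; rfl

lemma pawlikowski_apply_eq_zero_iff {x : ℕ → OnePoint ℕ} {n : ℕ} :
    pawlikowski x n = 0 ↔ x n = ∞ := by
  induction h : x n using OnePoint.rec <;> simp [h]

lemma pawlikowski_apply_eq_apply_iff {x y : ℕ → OnePoint ℕ} {n : ℕ} :
    pawlikowski x n = pawlikowski y n ↔ x n = y n := by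
  induction hx : x n using OnePoint.rec <;> induction hy : y n using OnePoint.rec <;>
    simp [hx, hy]

lemma pawlikowski_mem_cylinder_iff {x y : ℕ → OnePoint ℕ} {N : ℕ} :
    pawlikowski y ∈ cylinder (pawlikowski x) N ↔ y ∈ cylinder x N := by
  simp only [mem_cylinder_iff, pawlikowski_apply_eq_apply_iff]

lemma not_continuousWithinAt_pawlikowski {A : Set (ℕ → OnePoint ℕ)} {a : ℕ → OnePoint ℕ}
    {N : ℕ} (haN : a N = ∞) (hdense : cylinder (pawlikowski a) N ⊆ closure (pawlikowski '' A)) :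
    ¬ ContinuousWithinAt pawlikowski A a := by
  intro hcont
  obtain ⟨U, hUo, haU, hUA⟩ := mem_nhdsWithin.1 <| hcont.preimage_mem_nhdsWithin
    ((isOpen_cylinder _ (pawlikowski a) (N + 1)).mem_nhds (self_mem_cylinder _ _))
  obtain ⟨k, hk⟩ := ((tendsto_update_coe_of_eq_infty haN).eventually (hUo.mem_nhds haU)).exists
  set x := update a N (k : OnePoint ℕ)
  obtain ⟨M, hMU, hNM⟩ :=
    ((eventually_cylinder_subset (hUo.mem_nhds hk)).and (eventually_gt_atTop N)).exists
  obtain ⟨_, ha', a', ha'A, rfl⟩ := inter_cylinder_nonempty_of_subset_closure hdense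
    (pawlikowski_mem_cylinder_iff.2 (update_mem_cylinder a N _)) M
  have ha'x : a' ∈ cylinder x M := pawlikowski_mem_cylinder_iff.1 ha'
  have ha'a : a' ∈ cylinder a (N + 1) := pawlikowski_mem_cylinder_iff.1 (hUA ⟨hMU ha'x, ha'A⟩)
  have ha'N_coe : a' N = k := by simpa [x] using ha'x N hNM
  have ha'N_infty : a' N = ∞ := (ha'a N (lt_add_one N)).trans haN
  exact coe_ne_infty k (ha'N_coe.symm.trans ha'N_infty)

/-- If `P` restricted to `A` is continuous, then `P[A]` is nowhere dense in Baire space. -/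
theorem pawlikowski_image_nowhereDense (A : Set (ℕ → OnePoint ℕ))
    (hA : ContinuousOn pawlikowski A) :
    IsNowhereDense (pawlikowski '' A) := by
  by_contra hB
  obtain ⟨y, hy⟩ := Set.nonempty_iff_ne_empty.2 hB
  obtain ⟨N, hN⟩ := (eventually_cylinder_subset (mem_interior_iff_mem_nhds.1 hy)).exists
  obtain ⟨_, ha, a, haA, rfl⟩ :=
    inter_cylinder_nonempty_of_subset_closure hN (update_mem_cylinder y N 0) (N + 1)
  have haN : a N = ∞ :=
    pawlikowski_apply_eq_zero_iff.1 (by simpa using mem_cylinder_iff.1 ha N (lt_add_one N))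
  have hay : cylinder (pawlikowski a) N = cylinder y N :=
    mem_cylinder_iff_eq.1 <| mem_cylinder_iff_eq.1 (update_mem_cylinder y N 0) ▸
      cylinder_anti _ N.le_succ ha
  exact not_continuousWithinAt_pawlikowski haN (hay ▸ hN) (hA a haA)
end

section
/- The Pawlikowski function P : (ω+1)^ω → ω^ω is not σ-continuous: there is no countable cover (ω+1)^ω = ⋃_n X_n such that P restricted to each X_n is continuous. -/
open OnePoint Filter Topology

namespace PawlikowskiAux

/-- Points with infinitely many `∞` coordinates. -/
def R : Set (ℕ → OnePoint ℕ) := {x | ∀ N, ∃ j, N ≤ j ∧ x j = ∞}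

lemma paw_infty {x : ℕ → OnePoint ℕ} {j : ℕ} (h : x j = ∞) : pawlikowski x j = 0 := by
  simp only [pawlikowski, h]; rfl

lemma paw_coe {x : ℕ → OnePoint ℕ} {j a : ℕ} (h : x j = (a : OnePoint ℕ)) :
    pawlikowski x j = a + 1 := by
  simp only [pawlikowski, h]; rfl

lemma tendsto_coe_atTop :
    Filter.Tendsto (fun b : ℕ => (b : OnePoint ℕ)) Filter.atTop (𝓝 (∞ : OnePoint ℕ)) := by
  have h := OnePoint.tendsto_coe_infty (X := ℕ)
  rwa [Filter.coclosedCompact_eq_cocompact, Filter.cocompact_eq_cofinite, Nat.cofinite_eq_atTop] at h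

/-- Core lemma: if `P` is continuous on `X`, then `X ∩ R` is nowhere dense in the
combinatorial sense: every finite condition `(s, k)` has an extension `(t, m)`
avoiding `X ∩ R`. -/
lemma core (X : Set (ℕ → OnePoint ℕ)) (hX : ContinuousOn pawlikowski X)
    (s : ℕ → OnePoint ℕ) (k : ℕ) :
    ∃ t : ℕ → OnePoint ℕ, ∃ m : ℕ, k ≤ m ∧ (∀ i < k, t i = s i) ∧
      ∀ y ∈ X, y ∈ R → ¬ (∀ i < m, y i = t i) := by
  by_contra hcon
  push_neg at hcon
  -- hcon is density of X ∩ R below (s, k)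
  -- find x ∈ X ∩ R compatible with (s, k)
  obtain ⟨x, hxX, hxR, hxs⟩ := hcon s k le_rfl (fun _ _ => rfl)
  -- a coordinate j ≥ k with x j = ∞
  obtain ⟨j, hjk, hj⟩ := hxR k
  -- continuity of y ↦ pawlikowski y j within X at x
  have hc : ContinuousWithinAt (fun y => pawlikowski y j) X x :=
    (continuous_apply j).continuousAt.comp_continuousWithinAt (hX x hxX)
  have h0 : pawlikowski x j = 0 := paw_infty hj
  have hmem : {y | pawlikowski y j = 0} ∈ nhdsWithin x X := by
    have : {n : ℕ | n = 0} ∈ 𝓝 (pawlikowski x j) := by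
      rw [h0, nhds_discrete]
      simp
    exact hc this
  rw [mem_nhdsWithin] at hmem
  obtain ⟨U, hUopen, hxU, hUsub⟩ := hmem
  obtain ⟨F, V, hFV, hVsub⟩ := isOpen_pi_iff.mp hUopen x hxU
  -- a tail bound for coordinate j
  have hbound : ∃ a : ℕ, ∀ b, a ≤ b → j ∈ F → (b : OnePoint ℕ) ∈ V j := by
    by_cases hjF : j ∈ F
    · have hVj : V j ∈ 𝓝 (∞ : OnePoint ℕ) := by
        have := (hFV j hjF).1
        have hx : (∞ : OnePoint ℕ) ∈ V j := hj ▸ (hFV j hjF).2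
        exact this.mem_nhds hx
      obtain ⟨a, ha⟩ := (Filter.eventually_atTop).mp (tendsto_coe_atTop hVj)
      exact ⟨a, fun b hb _ => ha b hb⟩
    · exact ⟨0, fun b _ h => absurd h hjF⟩
  obtain ⟨a, ha⟩ := hbound
  -- build the extension t = x with coordinate j changed to a finite value
  set t : ℕ → OnePoint ℕ := Function.update x j (a : OnePoint ℕ) with ht_def
  set m : ℕ := max (max k (j + 1)) ((F.sup id) + 1) with hm_def
  have hkm : k ≤ m := le_max_of_le_left (le_max_left _ _)
  have hjm : j < m := lt_of_lt_of_le (Nat.lt_succ_self j) (le_max_of_le_left (le_max_right _ _))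
  have hFm : ∀ i ∈ F, i < m := fun i hi =>
    lt_of_lt_of_le (Nat.lt_succ_of_le (Finset.le_sup (f := id) hi)) (le_max_right _ _)
  have hts : ∀ i < k, t i = s i := by
    intro i hik
    have hij : i ≠ j := fun h => absurd hjk (by omega)
    rw [ht_def, Function.update_of_ne hij]
    exact hxs i hik
  -- density gives a point y of X ∩ R realizing (t, m)
  obtain ⟨y, hyX, hyR, hy⟩ := hcon t m hkm hts
  -- y lies in the basic open set, hence in U, hence pawlikowski y j = 0
  have hyU : y ∈ U := by
    apply hVsub
    intro i hi
    have him := hFm i hi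
    rw [hy i him]
    by_cases hij : i = j
    · subst hij
      rw [ht_def, Function.update_self]
      exact ha a le_rfl hi
    · rw [ht_def, Function.update_of_ne hij]
      exact (hFV i hi).2
  have hy0 : pawlikowski y j = 0 := hUsub ⟨hyU, hyX⟩
  have hyj : y j = (a : OnePoint ℕ) := by
    rw [hy j hjm, ht_def, Function.update_self]
  rw [paw_coe hyj] at hy0
  exact Nat.succ_ne_zero a hy0

end PawlikowskiAux

/-- The Pawlikowski function is not σ-continuous: there is no countable cover of
`(ω+1)^ω` by sets on each of which `P` is continuous. -/
theorem pawlikowski_not_sigmaContinuous :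
    ¬ ∃ Xs : ℕ → Set (ℕ → OnePoint ℕ),
        (⋃ n, Xs n) = Set.univ ∧ ∀ n, ContinuousOn pawlikowski (Xs n) := by
  rintro ⟨Xs, hcover, hcont⟩
  classical
  -- the one-step extension from the core lemma
  choose t m hkm hagree hstop using fun (n : ℕ) (p : (ℕ → OnePoint ℕ) × ℕ) =>
    PawlikowskiAux.core (Xs n) (hcont n) (Function.update p.1 p.2 ∞) (p.2 + 1)
  -- the fusion sequence
  set seq : ℕ → (ℕ → OnePoint ℕ) × ℕ :=
    fun n => Nat.rec ((fun _ => (∞ : OnePoint ℕ)), 0) (fun n p => (t n p, m n p)) n with hseq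
  have hseq_succ : ∀ n, seq (n + 1) = (t n (seq n), m n (seq n)) := fun n => rfl
  have hlt : ∀ n, (seq n).2 < (seq (n + 1)).2 := by
    intro n
    rw [hseq_succ]
    exact hkm n (seq n)
  have hmono : StrictMono (fun n => (seq n).2) := strictMono_nat_of_lt_succ hlt
  have hle : ∀ n, n ≤ (seq n).2 := fun n => hmono.le_apply
  -- one-step coherence
  have hstep : ∀ n, ∀ i < (seq n).2, (seq (n + 1)).1 i = (seq n).1 i := by
    intro n i hi
    have h1 : (seq (n + 1)).1 i = Function.update (seq n).1 (seq n).2 ∞ i := by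
      rw [hseq_succ]
      exact hagree n (seq n) i (Nat.lt_succ_of_lt hi)
    rw [h1, Function.update_of_ne (Nat.ne_of_lt hi)]
  have hstep_top : ∀ n, (seq (n + 1)).1 (seq n).2 = ∞ := by
    intro n
    have h1 : (seq (n + 1)).1 (seq n).2 = Function.update (seq n).1 (seq n).2 ∞ (seq n).2 := by
      rw [hseq_succ]
      exact hagree n (seq n) (seq n).2 (Nat.lt_succ_self _)
    rw [h1, Function.update_self]
  -- general coherence
  have hcoh : ∀ a b, a ≤ b → ∀ i < (seq a).2, (seq b).1 i = (seq a).1 i := by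
    intro a b hab
    induction b, hab using Nat.le_induction with
    | base => intro i _; rfl
    | succ b hab ih =>
      intro i hi
      have hi' : i < (seq b).2 := lt_of_lt_of_le hi (hmono.monotone hab)
      rw [hstep b i hi', ih i hi]
  -- the diagonal point
  set z : ℕ → OnePoint ℕ := fun i => (seq (i + 1)).1 i with hz
  have hzval : ∀ n, ∀ i < (seq n).2, z i = (seq n).1 i := by
    intro n i hi
    have hi2 : i < (seq (i + 1)).2 := lt_of_lt_of_le (Nat.lt_succ_self i) (hle (i + 1))
    have e1 : (seq (max n (i + 1))).1 i = (seq (i + 1)).1 i :=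
      hcoh (i + 1) (max n (i + 1)) (le_max_right _ _) i hi2
    have e2 : (seq (max n (i + 1))).1 i = (seq n).1 i :=
      hcoh n (max n (i + 1)) (le_max_left _ _) i hi
    have e0 : z i = (seq (i + 1)).1 i := rfl
    rw [e0, ← e1, e2]
  have hzR : z ∈ PawlikowskiAux.R := by
    intro N
    refine ⟨(seq N).2, hle N |>.trans ?_, ?_⟩
    · exact le_rfl
    · have h1 : (seq N).2 < (seq (N + 1)).2 := hlt N
      rw [hzval (N + 1) (seq N).2 h1]
      exact hstep_top N
  have hznot : ∀ n, z ∉ Xs n := by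
    intro n hzX
    apply hstop n (seq n) z hzX hzR
    intro i hi
    have : i < (seq (n + 1)).2 := by rw [hseq_succ]; exact hi
    rw [hzval (n + 1) i this, hseq_succ]
  have : z ∈ ⋃ n, Xs n := hcover ▸ Set.mem_univ z
  obtain ⟨_, ⟨n, rfl⟩, hn⟩ := this
  exact hznot n hn
end

section
/- If a Borel function f : X → Y between Polish spaces is σ-continuous with arbitrary pieces, then it is σ-continuous with Borel pieces: there exist Borel sets B_n covering X such that f restricted to each B_n is continuous. -/
/-!
Let `f` be continuous on `S`. The set `B` of points `x ∈ closure S` at which `f y → f x` as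
`y → x` within `S` contains `S`, and `f` is continuous on `B`, because on `B` it agrees with the
extension of `f ↾ S` by limits. Moreover `B` is Borel: it is the preimage, under the Borel map
`x ↦ (x, f x)`, of the `Gδ` set of pairs `(x, y)` such that `f → y` within `S` at `x`, intersected
with the closed set `closure S`. Applying this to each piece `Xₙ` gives the Borel pieces.
-/

open Set Filter Topology

section

variable {X Y : Type*} [TopologicalSpace X]

theorem isGδ_setOf_tendsto_nhdsWithin [PseudoMetricSpace Y] (f : X → Y) (S : Set X) :
    IsGδ {p : X × Y | Tendsto f (𝓝[S] p.1) (𝓝 p.2)} := by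
  set E : ℝ → Set (X × Y) := fun ε => {p | ∀ᶠ a in 𝓝[S] p.1, dist (f a) p.2 < ε}
  -- Approximate limits with a margin `ε / 2` are stable under small moves of both `x` and `y`.
  have half_subset_interior : ∀ ε > 0, E (ε / 2) ⊆ interior (E ε) := by
    rintro ε hε ⟨x, y⟩ hxy
    rw [mem_interior_iff_mem_nhds, nhds_prod_eq]
    have hx : ∀ᶠ x' in 𝓝 x, ∀ᶠ a in 𝓝[S] x', dist (f a) y < ε / 2 :=
      eventually_nhds_nhdsWithin.2 hxy
    have hy : ∀ᶠ y' in 𝓝 y, dist y' y < ε / 2 := Metric.ball_mem_nhds y (half_pos hε)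
    filter_upwards [hx.prod_mk hy] with ⟨x', y'⟩ ⟨hx', hy'⟩
    filter_upwards [hx'] with a ha
    calc dist (f a) y' ≤ dist (f a) y + dist y' y := dist_triangle_right _ _ _
      _ < ε / 2 + ε / 2 := add_lt_add ha hy'
      _ = ε := add_halves ε
  suffices {p : X × Y | Tendsto f (𝓝[S] p.1) (𝓝 p.2)} = ⋂ n : ℕ, interior (E (1 / (n + 1))) by
    rw [this]
    exact .iInter fun n => isOpen_interior.isGδ
  ext p
  simp only [mem_ofPred_eq, mem_iInter, Metric.tendsto_nhds]
  constructor
  · exact fun hp n => half_subset_interior _ Nat.one_div_pos_of_nat (hp _ (by positivity))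
  · intro hp ε hε
    obtain ⟨n, hn⟩ := exists_nat_one_div_lt hε
    have hpn : ∀ᶠ a in 𝓝[S] p.1, dist (f a) p.2 < 1 / (n + 1) :=
      interior_subset (s := E _) (hp n)
    exact hpn.mono fun a ha => ha.trans hn

theorem continuousOn_setOf_tendsto_nhdsWithin [TopologicalSpace Y] [T3Space Y] (f : X → Y)
    (S : Set X) : ContinuousOn f {x | x ∈ closure S ∧ Tendsto f (𝓝[S] x) (𝓝 (f x))} :=
  (continuousOn_extendFrom (fun _ hx => hx.1) fun x hx => ⟨f x, hx.2⟩).congr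
    fun _ hx => (extendFrom_eq hx.1 hx.2).symm

theorem ContinuousOn.exists_measurableSet_superset_continuousOn [SecondCountableTopology X]
    [MeasurableSpace X] [BorelSpace X] [MetricSpace Y] [SecondCountableTopology Y]
    [MeasurableSpace Y] [BorelSpace Y] {f : X → Y} (hf : Measurable f) {S : Set X}
    (hS : ContinuousOn f S) : ∃ B, MeasurableSet B ∧ S ⊆ B ∧ ContinuousOn f B := by
  refine ⟨{x | x ∈ closure S ∧ Tendsto f (𝓝[S] x) (𝓝 (f x))}, ?_,
    fun x hx => ⟨subset_closure hx, hS x hx⟩, continuousOn_setOf_tendsto_nhdsWithin f S⟩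
  exact isClosed_closure.measurableSet.inter <|
    (isGδ_setOf_tendsto_nhdsWithin f S).measurableSet.preimage (measurable_id.prodMk hf)

end

/-- A Borel function between Polish spaces that is σ-continuous with arbitrary pieces
is σ-continuous with Borel pieces. -/
theorem sigmaContinuous_with_borel_pieces
    {X Y : Type*} [TopologicalSpace X] [PolishSpace X] [TopologicalSpace Y] [PolishSpace Y]
    [MeasurableSpace X] [BorelSpace X] [MeasurableSpace Y] [BorelSpace Y]
    (f : X → Y) (hf : Measurable f)
    (h : ∃ Xs : ℕ → Set X, (⋃ n, Xs n) = Set.univ ∧ ∀ n, ContinuousOn f (Xs n)) :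
    ∃ B : ℕ → Set X, (∀ n, MeasurableSet (B n)) ∧ (⋃ n, B n) = Set.univ ∧
      ∀ n, ContinuousOn f (B n) := by
  let := TopologicalSpace.metrizableSpaceMetric Y
  obtain ⟨Xs, hcover, hcont⟩ := h
  choose B hB hXsB hBcont using fun n => (hcont n).exists_measurableSet_superset_continuousOn hf
  exact ⟨B, hB, eq_univ_of_subset (iUnion_mono hXsB) hcover, hBcont⟩
end

section
/- Let f : X → ω^ω be a Borel function on a Borel subset X of a Polish space such that f⁻¹[C] = (f⁻¹[C])^* for all clopen C ⊆ ω^ω, where B^* denotes B with all basic clopen sets having I_f-small intersection with B removed. Define U_τ = int(f⁻¹[[τ]]) for τ ∈ ω^{<ω}, G = ⋂_n ⋃_{|τ|=n} U_τ, and Z_τ = f⁻¹[[τ]] \ U_τ. Then f restricted to G is continuous. -/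
/-- `f` restricted to `A` is σ-continuous. -/
def SigmaContOn {X Y : Type*} [TopologicalSpace X] [TopologicalSpace Y]
    (f : X → Y) (A : Set X) : Prop :=
  ∃ g : ℕ → Set X, A = ⋃ n, g n ∧ ∀ n, ContinuousOn f (g n)

/-- The basic clopen set `[τ]` of Baire space determined by a finite sequence `τ`. -/
def cyl (τ : List ℕ) : Set (ℕ → ℕ) := {x | ∀ i : Fin τ.length, x i = τ.get i}

/-- `S^*`: `S` with all clopen sets having `I_f`-small intersection with `S` removed. -/
def starOf {X Y : Type*} [TopologicalSpace X] [TopologicalSpace Y]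
    (f : X → Y) (S : Set X) : Set X :=
  S \ ⋃₀ {C : Set X | IsClopen C ∧ SigmaContOn f (S ∩ C)}

theorem cyl_subset_cylinder_length {τ : List ℕ} {y : ℕ → ℕ} (hy : y ∈ cyl τ) :
    cyl τ ⊆ PiNat.cylinder y τ.length :=
  fun _ hz i hi => (hz ⟨i, hi⟩).trans (hy ⟨i, hi⟩).symm

theorem continuousAt_of_forall_mem_interior_preimage_cyl {X : Type*} [TopologicalSpace X]
    (f : X → ℕ → ℕ) {x : X}
    (hx : ∀ n, ∃ τ : List ℕ, τ.length = n ∧ x ∈ interior (f ⁻¹' cyl τ)) :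
    ContinuousAt f x := by
  intro t ht
  obtain ⟨_, ⟨y, n, rfl⟩, hfx, hsub⟩ :=
    (PiNat.isTopologicalBasis_cylinders fun _ : ℕ => ℕ).mem_nhds_iff.1 ht
  obtain ⟨τ, rfl, hxτ⟩ := hx n
  have hfx_cyl : x ∈ f ⁻¹' cyl τ := interior_subset hxτ
  filter_upwards [mem_interior_iff_mem_nhds.1 hxτ] with z hz
  apply hsub
  rw [← PiNat.mem_cylinder_iff_eq.1 hfx]
  exact cyl_subset_cylinder_length hfx_cyl hz

theorem continuousOn_G_general {X : Type*} [TopologicalSpace X]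
    (f : X → (ℕ → ℕ)) :
    ContinuousOn f
      (⋂ n : ℕ, ⋃ (τ : List ℕ) (_ : τ.length = n), interior (f ⁻¹' cyl τ)) := by
  intro x hx
  refine (continuousAt_of_forall_mem_interior_preimage_cyl f fun n => ?_).continuousWithinAt
  simpa only [Set.mem_iUnion, exists_prop] using Set.mem_iInter.1 hx n

/-- If `f⁻¹[C] = (f⁻¹[C])^*` for all clopen `C ⊆ ω^ω`, then `f` is continuous on
`G = ⋂_n ⋃_{|τ|=n} int (f⁻¹[[τ]])`. -/
theorem continuousOn_G {X : Type*} [TopologicalSpace X] [PolishSpace X]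
    [MeasurableSpace X] [BorelSpace X]
    (f : X → (ℕ → ℕ)) (hf : Measurable f)
    (hstar : ∀ C : Set (ℕ → ℕ), IsClopen C → f ⁻¹' C = starOf f (f ⁻¹' C)) :
    ContinuousOn f
      (⋂ n : ℕ, ⋃ (τ : List ℕ) (_ : τ.length = n), interior (f ⁻¹' cyl τ)) :=
  continuousOn_G_general f
end

section
/- Let f : X → ω^ω be Borel and not σ-continuous. Define U_τ = int(f⁻¹[[τ]]) for τ ∈ ω^{<ω}, G = ⋂_n ⋃_{|τ|=n} U_τ and Z_τ = f⁻¹[[τ]] \ U_τ. Then there exists τ ∈ ω^{<ω} such that f restricted to Z_τ is not σ-continuous. -/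
open Set Topology PiNat

namespace SigmaContOn

variable {X Y : Type*} [TopologicalSpace X] [TopologicalSpace Y] {f : X → Y}

theorem of_continuousOn {A : Set X} (h : ContinuousOn f A) : SigmaContOn f A :=
  ⟨fun _ => A, (iUnion_const A).symm, fun _ => h⟩

theorem mono {A B : Set X} (h : SigmaContOn f A) (hBA : B ⊆ A) : SigmaContOn f B := by
  obtain ⟨g, rfl, hg⟩ := h
  refine ⟨fun n => g n ∩ B, ?_, fun n => (hg n).mono inter_subset_left⟩
  rw [← iUnion_inter, inter_eq_right.2 hBA]

theorem iUnion {ι : Type*} [Countable ι] {A : ι → Set X} (h : ∀ i, SigmaContOn f (A i)) :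
    SigmaContOn f (⋃ i, A i) := by
  choose g hg hcont using h
  cases isEmpty_or_nonempty (ι × ℕ) with
  | inl hempty =>
    have : IsEmpty ι := (isEmpty_prod.1 hempty).resolve_right (not_isEmpty_of_nonempty ℕ)
    exact ⟨fun _ => ∅, by simp, fun _ => continuousOn_empty f⟩
  | inr _ =>
    obtain ⟨e, he⟩ := exists_surjective_nat (ι × ℕ)
    refine ⟨fun k => g (e k).1 (e k).2, ?_, fun k => hcont _ _⟩
    rw [he.iUnion_comp (fun p => g p.1 p.2), iUnion_prod']
    simp only [← hg]

theorem union {A B : Set X} (hA : SigmaContOn f A) (hB : SigmaContOn f B) :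
    SigmaContOn f (A ∪ B) := by
  rw [union_eq_iUnion]
  exact iUnion fun b => by cases b <;> assumption

end SigmaContOn

theorem cyl_ofFn (y : ℕ → ℕ) (n : ℕ) : cyl (List.ofFn fun i : Fin n => y i) = cylinder y n := by
  ext z
  simp [cyl, mem_cylinder_iff, Fin.forall_iff]

theorem PiNat.hasBasis_nhds_cylinder {E : ℕ → Type*} [∀ n, TopologicalSpace (E n)]
    [∀ n, DiscreteTopology (E n)] (x : ∀ n, E n) :
    (𝓝 x).HasBasis (fun _ => True) (cylinder x) := by
  refine ⟨fun s => ⟨fun hs => ?_, fun ⟨n, _, hn⟩ =>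
    Filter.mem_of_superset ((isOpen_cylinder E x n).mem_nhds (self_mem_cylinder x n)) hn⟩⟩
  obtain ⟨_, ⟨z, n, rfl⟩, hx, hsub⟩ := (isTopologicalBasis_cylinders E).mem_nhds_iff.1 hs
  exact ⟨n, trivial, mem_cylinder_iff_eq.1 hx ▸ hsub⟩

theorem continuousAt_iff_preimage_cylinder_mem_nhds {X : Type*} [TopologicalSpace X]
    {E : ℕ → Type*} [∀ n, TopologicalSpace (E n)] [∀ n, DiscreteTopology (E n)]
    {f : X → ∀ n, E n} {x : X} :
    ContinuousAt f x ↔ ∀ n, f ⁻¹' cylinder (f x) n ∈ 𝓝 x := by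
  rw [ContinuousAt, (hasBasis_nhds_cylinder (f x)).tendsto_right_iff]
  simp only [forall_const]
  rfl

theorem exists_mem_preimage_cyl_diff_interior {X : Type*} [TopologicalSpace X]
    {f : X → ℕ → ℕ} {x : X} (hx : ¬ ContinuousAt f x) :
    ∃ τ : List ℕ, x ∈ f ⁻¹' cyl τ \ interior (f ⁻¹' cyl τ) := by
  obtain ⟨n, hn⟩ := not_forall.1 (continuousAt_iff_preimage_cylinder_mem_nhds.not.1 hx)
  refine ⟨List.ofFn fun i : Fin n => f x i, ?_⟩
  rw [cyl_ofFn]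
  exact ⟨self_mem_cylinder (f x) n, fun h => hn (mem_interior_iff_mem_nhds.1 h)⟩

theorem exists_Z_not_sigmaContinuous_general {X : Type*} [TopologicalSpace X]
    (f : X → (ℕ → ℕ)) (hns : ¬ SigmaContOn f Set.univ) :
    ∃ τ : List ℕ, ¬ SigmaContOn f (f ⁻¹' cyl τ \ interior (f ⁻¹' cyl τ)) := by
  by_contra! hZ
  have hcover : univ ⊆ {x | ContinuousAt f x} ∪ ⋃ τ, (f ⁻¹' cyl τ \ interior (f ⁻¹' cyl τ)) := by
    intro x _
    by_cases hx : ContinuousAt f x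
    · exact Or.inl hx
    · exact Or.inr (mem_iUnion.2 (exists_mem_preimage_cyl_diff_interior hx))
  have hG : SigmaContOn f {x | ContinuousAt f x} :=
    .of_continuousOn fun _ hx => hx.continuousWithinAt
  exact hns ((hG.union (.iUnion hZ)).mono hcover)

/-- If `f : X → ω^ω` is Borel and not σ-continuous, then for some finite sequence `τ`
the restriction of `f` to `Z_τ = f⁻¹[[τ]] \ int (f⁻¹[[τ]])` is not σ-continuous. -/
theorem exists_Z_not_sigmaContinuous {X : Type*} [TopologicalSpace X] [PolishSpace X]
    [MeasurableSpace X] [BorelSpace X]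
    (f : X → (ℕ → ℕ)) (hf : Measurable f) (hns : ¬ SigmaContOn f Set.univ) :
    ∃ τ : List ℕ, ¬ SigmaContOn f (f ⁻¹' cyl τ \ interior (f ⁻¹' cyl τ)) :=
  exists_Z_not_sigmaContinuous_general f hns
end

section
/- For fixed n and 1 ≤ k ≤ n, let S^n_k be the set of points in (ω+1)^n of Cantor–Bendixson rank ≥ n−k. Any projection π^n_k : S^n_k → S^n_{k−1} (which is the identity on S^n_{k−1}, and for τ ∈ S^n_k \ S^n_{k−1} replaces the maximal finite value of τ at some chosen coordinate by ω) is continuous. -/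
open OnePoint

/-- `S^n_k`: the set of points of `(ω+1)^n` of Cantor–Bendixson rank `≥ n - k`,
i.e. with at least `n - k` coordinates equal to `ω`. -/
def Sset (n k : ℕ) : Set (Fin n → OnePoint ℕ) :=
  {τ | n - k ≤ Nat.card {i : Fin n // τ i = ∞}}

private lemma isOpen_forall_coord {n : ℕ} (P : Fin n → OnePoint ℕ → Prop)
    (hP : ∀ l, IsOpen {x | P l x}) :
    IsOpen {σ : Fin n → OnePoint ℕ | ∀ l, P l (σ l)} := by
  have h : {σ : Fin n → OnePoint ℕ | ∀ l, P l (σ l)}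
      = ⋂ l, (fun σ : Fin n → OnePoint ℕ => σ l) ⁻¹' {x | P l x} := by
    ext σ; simp [Set.mem_iInter]
  rw [h]
  exact isOpen_iInter_of_finite fun l => (hP l).preimage (continuous_apply l)

private lemma isOpen_gtSet (N : ℕ) :
    IsOpen {x : OnePoint ℕ | ∀ m : ℕ, x = (m : OnePoint ℕ) → N < m} := by
  have hmem : (∞ : OnePoint ℕ) ∈ {x : OnePoint ℕ | ∀ m : ℕ, x = (m : OnePoint ℕ) → N < m} := by
    intro m hm
    exact absurd hm (OnePoint.infty_ne_coe m)
  rw [OnePoint.isOpen_iff_of_mem' hmem]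
  constructor
  · have h : (((↑) : ℕ → OnePoint ℕ) ⁻¹'
        {x : OnePoint ℕ | ∀ m : ℕ, x = (m : OnePoint ℕ) → N < m})ᶜ = Set.Iic N := by
      ext m
      simp [OnePoint.coe_eq_coe, Set.mem_Iic, not_lt]
    rw [h]
    exact (Set.finite_Iic N).isCompact
  · exact isOpen_discrete _

private lemma isOpen_eqCoe (c : ℕ) : IsOpen {x : OnePoint ℕ | x = (c : OnePoint ℕ)} := by
  have h : {x : OnePoint ℕ | x = (c : OnePoint ℕ)} = ((↑) : ℕ → OnePoint ℕ) '' {c} := by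
    ext x; simp [eq_comm]
  rw [h]
  exact OnePoint.isOpenMap_coe _ (isOpen_discrete _)

private lemma exists_bound_of_mem_nhds_infty {V : Set (OnePoint ℕ)} (hV : V ∈ nhds ∞) :
    ∃ M : ℕ, ∀ x : OnePoint ℕ, (∀ m : ℕ, x = (m : OnePoint ℕ) → M < m) → x ∈ V := by
  obtain ⟨W, hWV, hWopen, hWinfty⟩ := mem_nhds_iff.mp hV
  rw [OnePoint.isOpen_iff_of_mem' hWinfty] at hWopen
  have hfin : (((↑) : ℕ → OnePoint ℕ) ⁻¹' W)ᶜ.Finite := hWopen.1.finite_of_discrete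
  refine ⟨hfin.toFinset.sup id, fun x hx => ?_⟩
  induction x using OnePoint.rec with
  | infty => exact hWV hWinfty
  | coe m =>
    apply hWV
    by_contra hm
    have hmem : m ∈ hfin.toFinset := hfin.mem_toFinset.mpr hm
    have hle : m ≤ hfin.toFinset.sup id := Finset.le_sup (f := id) hmem
    have hlt := hx m rfl
    omega

private lemma card_infty_mono {n : ℕ} (σ τ : Fin n → OnePoint ℕ)
    (h : ∀ i, σ i = ∞ → τ i = ∞) :
    Nat.card {i : Fin n // σ i = ∞} ≤ Nat.card {i : Fin n // τ i = ∞} := by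
  classical
  simp only [Nat.card_eq_fintype_card]
  exact Fintype.card_subtype_mono _ _ h

/-- Any projection `π^n_k : S^n_k → S^n_{k-1}` — i.e. a map which is the identity on
`S^n_{k-1}` and, on `S^n_k \ S^n_{k-1}`, replaces by `ω` the value at some coordinate
carrying the maximal finite value — is continuous on `S^n_k`. -/
theorem projection_continuous (n k : ℕ) (hk : 1 ≤ k) (hkn : k ≤ n)
    (π : (Fin n → OnePoint ℕ) → (Fin n → OnePoint ℕ))
    (hmaps : Set.MapsTo π (Sset n k) (Sset n (k - 1)))
    (hid : ∀ τ ∈ Sset n (k - 1), π τ = τ)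
    (hproj : ∀ τ ∈ Sset n k \ Sset n (k - 1), ∃ i : Fin n,
      (∃ m : ℕ, τ i = (m : OnePoint ℕ)) ∧
      (∀ j : Fin n, ∀ mj mi : ℕ, τ j = (mj : OnePoint ℕ) → τ i = (mi : OnePoint ℕ) →
        mj ≤ mi) ∧
      π τ = Function.update τ i ∞) :
    ContinuousOn π (Sset n k) := by
  classical
  intro τ hτ
  by_cases hτ' : τ ∈ Sset n (k - 1)
  · -- τ has rank ≥ n - k + 1
    -- a bound on the finite values of τ
    obtain ⟨M, hM⟩ : ∃ M : ℕ, ∀ l : Fin n, ∀ m : ℕ, τ l = (m : OnePoint ℕ) → m ≤ M := by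
      refine ⟨Finset.univ.sup (fun l : Fin n =>
        if h : ∃ m : ℕ, τ l = (m : OnePoint ℕ) then h.choose else 0), fun l m hm => ?_⟩
      have hex : ∃ m : ℕ, τ l = (m : OnePoint ℕ) := ⟨m, hm⟩
      have h1 : hex.choose = m :=
        OnePoint.coe_eq_coe.mp (hex.choose_spec.symm.trans hm)
      have h2 : (if h : ∃ m : ℕ, τ l = (m : OnePoint ℕ) then h.choose else 0)
          ≤ Finset.univ.sup (fun l : Fin n =>
            if h : ∃ m : ℕ, τ l = (m : OnePoint ℕ) then h.choose else 0) :=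
        Finset.le_sup (f := fun l : Fin n =>
          if h : ∃ m : ℕ, τ l = (m : OnePoint ℕ) then h.choose else 0) (Finset.mem_univ l)
      rw [dif_pos hex, h1] at h2
      exact h2
    set U : ℕ → Set (Fin n → OnePoint ℕ) := fun N =>
      {σ | ∀ l, (τ l ≠ ∞ → σ l = τ l) ∧ (τ l = ∞ → ∀ m : ℕ, σ l = (m : OnePoint ℕ) → N < m)}
      with hU
    have hUopen : ∀ N, IsOpen (U N) := by
      intro N
      refine isOpen_forall_coord (fun l x =>
        (τ l ≠ ∞ → x = τ l) ∧ (τ l = ∞ → ∀ m : ℕ, x = (m : OnePoint ℕ) → N < m)) ?_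
      intro l
      by_cases hl : τ l = ∞
      · have h : {x : OnePoint ℕ |
            (τ l ≠ ∞ → x = τ l) ∧ (τ l = ∞ → ∀ m : ℕ, x = (m : OnePoint ℕ) → N < m)}
            = {x : OnePoint ℕ | ∀ m : ℕ, x = (m : OnePoint ℕ) → N < m} := by
          ext x; simp [hl]
        rw [h]; exact isOpen_gtSet N
      · obtain ⟨c, hc⟩ := OnePoint.ne_infty_iff_exists.mp hl
        have h : {x : OnePoint ℕ |
            (τ l ≠ ∞ → x = τ l) ∧ (τ l = ∞ → ∀ m : ℕ, x = (m : OnePoint ℕ) → N < m)}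
            = {x : OnePoint ℕ | x = ((c : ℕ) : OnePoint ℕ)} := by
          ext x; simp [hl, hc.symm]
        rw [h]; exact isOpen_eqCoe c
    have hUmem : ∀ N, τ ∈ U N := by
      intro N l
      refine ⟨fun _ => rfl, fun hl m hm => ?_⟩
      rw [hl] at hm
      exact absurd hm (OnePoint.infty_ne_coe m)
    have key : ∀ N, M ≤ N → ∀ σ, σ ∈ Sset n k → σ ∈ U N →
        (∀ j, τ j ≠ ∞ → π σ j = τ j) ∧ (∀ j, π σ j = σ j ∨ π σ j = ∞) := by
      intro N hN σ hσS hσU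
      by_cases hσ' : σ ∈ Sset n (k - 1)
      · rw [hid σ hσ']
        exact ⟨fun j hj => (hσU j).1 hj, fun j => Or.inl rfl⟩
      · obtain ⟨i, ⟨mi, hmi⟩, hmax, hupd⟩ := hproj σ ⟨hσS, hσ'⟩
        have hτi : τ i = ∞ := by
          by_contra hne
          obtain ⟨c, hc⟩ := OnePoint.ne_infty_iff_exists.mp hne
          have hσi : σ i = ((c : ℕ) : OnePoint ℕ) := ((hσU i).1 hne).trans hc.symm
          have hci : mi = c := OnePoint.coe_eq_coe.mp (hmi.symm.trans hσi)
          have hcM : c ≤ M := hM i c hc.symm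
          have hnotall : ¬ ∀ l, τ l = ∞ → σ l = ∞ := by
            intro hall
            exact hσ' (le_trans hτ' (card_infty_mono τ σ hall))
          push_neg at hnotall
          obtain ⟨l, hl, hlne⟩ := hnotall
          obtain ⟨m, hm⟩ := OnePoint.ne_infty_iff_exists.mp hlne
          have h1 : N < m := (hσU l).2 hl m hm.symm
          have h2 : m ≤ mi := hmax l m mi hm.symm hmi
          omega
        constructor
        · intro j hj
          have hji : j ≠ i := fun h => hj (h ▸ hτi)
          rw [hupd, Function.update_of_ne hji, (hσU j).1 hj]
        · intro j
          rw [hupd]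
          by_cases hji : j = i
          · subst hji; right; rw [Function.update_self]
          · left; rw [Function.update_of_ne hji]
    show Filter.Tendsto π (nhdsWithin τ (Sset n k)) (nhds (π τ))
    rw [hid τ hτ', tendsto_pi_nhds]
    intro j
    by_cases hj : τ j = ∞
    · rw [hj, Filter.tendsto_def]
      intro V hV
      obtain ⟨M', hM'⟩ := exists_bound_of_mem_nhds_infty hV
      refine mem_nhdsWithin.mpr ⟨U (max M M'), hUopen _, hUmem _, ?_⟩
      rintro σ ⟨hσU, hσS⟩
      apply hM'
      intro m hm
      have hm' : π σ j = (m : OnePoint ℕ) := hm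
      rcases (key (max M M') (le_max_left _ _) σ hσS hσU).2 j with h | h
      · have hlt := (hσU j).2 hj m (h ▸ hm')
        exact lt_of_le_of_lt (le_max_right M M') hlt
      · rw [h] at hm'
        exact absurd hm' (OnePoint.infty_ne_coe m)
    · obtain ⟨c, hc⟩ := OnePoint.ne_infty_iff_exists.mp hj
      have hev : (fun σ => π σ j) =ᶠ[nhdsWithin τ (Sset n k)]
          (fun _ => ((c : ℕ) : OnePoint ℕ)) := by
        have hmem : U M ∩ Sset n k ∈ nhdsWithin τ (Sset n k) :=
          Filter.inter_mem (mem_nhdsWithin_of_mem_nhds ((hUopen M).mem_nhds (hUmem M)))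
            self_mem_nhdsWithin
        filter_upwards [hmem] with σ hσ
        exact ((key M le_rfl σ hσ.2 hσ.1).1 j hj).trans hc.symm
      rw [← hc]
      exact Filter.Tendsto.congr' hev.symm tendsto_const_nhds
  · -- τ has rank exactly n - k : it is isolated in Sset n k
    have hcard : Nat.card {i : Fin n // τ i = ∞} ≤ n - k := by
      by_contra h
      apply hτ'
      show n - (k - 1) ≤ Nat.card {i : Fin n // τ i = ∞}
      omega
    have hsingle : {τ} ∈ nhdsWithin τ (Sset n k) := by
      refine mem_nhdsWithin.mpr ⟨{σ | ∀ l, τ l ≠ ∞ → σ l = τ l}, ?_, fun l _ => rfl, ?_⟩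
      · refine isOpen_forall_coord (fun l x => τ l ≠ ∞ → x = τ l) ?_
        intro l
        by_cases hl : τ l = ∞
        · have h : {x : OnePoint ℕ | τ l ≠ ∞ → x = τ l} = Set.univ := by
            ext x; simp [hl]
          rw [h]; exact isOpen_univ
        · obtain ⟨c, hc⟩ := OnePoint.ne_infty_iff_exists.mp hl
          have h : {x : OnePoint ℕ | τ l ≠ ∞ → x = τ l}
              = {x : OnePoint ℕ | x = ((c : ℕ) : OnePoint ℕ)} := by
            ext x; simp [hl, hc.symm]
          rw [h]; exact isOpen_eqCoe c
      · rintro σ ⟨hσU, hσS⟩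
        have hsub : ∀ i, σ i = ∞ → τ i = ∞ := by
          intro i h
          by_contra hne
          rw [hσU i hne] at h
          exact hne h
        have hA : Finset.univ.filter (fun i => σ i = ∞)
            ⊆ Finset.univ.filter (fun i => τ i = ∞) := by
          intro i hi
          simp only [Finset.mem_filter] at *
          exact ⟨hi.1, hsub i hi.2⟩
        have h1 : Nat.card {i : Fin n // σ i = ∞}
            = (Finset.univ.filter fun i => σ i = ∞).card := by
          rw [Nat.card_eq_fintype_card]; exact Fintype.card_subtype _
        have h2 : Nat.card {i : Fin n // τ i = ∞}
            = (Finset.univ.filter fun i => τ i = ∞).card := by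
          rw [Nat.card_eq_fintype_card]; exact Fintype.card_subtype _
        have hσS' : n - k ≤ Nat.card {i : Fin n // σ i = ∞} := hσS
        have hcards : (Finset.univ.filter fun i => τ i = ∞).card
            ≤ (Finset.univ.filter fun i => σ i = ∞).card := by omega
        have heq := Finset.eq_of_subset_of_card_le hA hcards
        have hall : ∀ i, τ i = ∞ → σ i = ∞ := by
          intro i hi
          have hmem : i ∈ Finset.univ.filter (fun i => σ i = ∞) := by
            rw [heq]
            exact Finset.mem_filter.mpr ⟨Finset.mem_univ i, hi⟩
          exact (Finset.mem_filter.mp hmem).2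
        have hστ : σ = τ := by
          funext i
          by_cases hi : τ i = ∞
          · rw [hall i hi, hi]
          · exact hσU i hi
        simp [hστ]
    show Filter.Tendsto π (nhdsWithin τ (Sset n k)) (nhds (π τ))
    have hle : nhdsWithin τ (Sset n k) ≤ pure τ := Filter.le_pure_iff.mpr hsingle
    exact (tendsto_pure_nhds π τ).mono_left hle
end
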